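/- arXiv:math/0311040 — 2 statements merged into one kernel-verified Lean document; each statement's English description precedes it below -/
import Mathlib

section
/- Let γ, η be hyperbolic affine isometries of R^{2,1} with linear parts g, h and translational parts v_g, v_h. For n ≥ 1, if gh^n and all h^{n-k}gh^k are hyperbolic, then α(γη^n) = ⟨v_g, x⁰(gh^n)⟩ + Σ_{k=0}^{n-1} ⟨v_h, x⁰(h^{n-k} g h^k)⟩. -/
noncomputable section

/-- The Lorentzian bilinear form of signature (2,1) on ℝ³. -/
def ldot (x y : Fin 3 → ℝ) : ℝ := x 0 * y 0 + x 1 * y 1 - x 2 * y 2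

/-- The Lorentz cross-product, the unique bilinear map with ⟨u, v ⊠ w⟩ = det[u v w]. -/
def lcross (v w : Fin 3 → ℝ) : Fin 3 → ℝ :=
  ![v 1 * w 2 - v 2 * w 1, v 2 * w 0 - v 0 * w 2, -(v 0 * w 1 - v 1 * w 0)]

/-- Determinant of the 3×3 matrix with columns x, y, z. -/
def det3 (x y z : Fin 3 → ℝ) : ℝ := (Matrix.transpose (Matrix.of ![x, y, z])).det

/-- Membership in SO(2,1)⁰: preserves the Lorentzian form, has determinant 1,
and preserves the future lightcone. -/
def IsSOplus (g : Matrix (Fin 3) (Fin 3) ℝ) : Prop :=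
  (∀ x y : Fin 3 → ℝ, ldot (g.mulVec x) (g.mulVec y) = ldot x y) ∧
  g.det = 1 ∧
  (∀ x : Fin 3 → ℝ, ldot x x = 0 → x ≠ 0 → x 2 > 0 → (g.mulVec x) 2 > 0)

/-- c is a (real) eigenvalue of the 3×3 matrix g. -/
def IsEigenvalue (g : Matrix (Fin 3) (Fin 3) ℝ) (c : ℝ) : Prop :=
  ∃ v : Fin 3 → ℝ, v ≠ 0 ∧ g.mulVec v = c • v

/-- x has Euclidean length one. -/
def EuclUnit (x : Fin 3 → ℝ) : Prop := x 0 ^ 2 + x 1 ^ 2 + x 2 ^ 2 = 1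

/-- A future-pointing lightlike vector. -/
def IsFutureNull (x : Fin 3 → ℝ) : Prop := ldot x x = 0 ∧ x 2 > 0

/-- The null frame of a hyperbolic g ∈ SO(2,1)⁰ : x0 is the unit-spacelike 1-eigenvector,
xm and xp are future-pointing Euclidean-unit eigenvectors for the eigenvalues λ and λ⁻¹
with 0 < λ < 1, and (x0, xm, xp) is positively oriented.  These conditions determine
x0 = x⁰(g), xm = x⁻(g), xp = x⁺(g) uniquely. -/
def IsNullFrameOf (g : Matrix (Fin 3) (Fin 3) ℝ) (x0 xm xp : Fin 3 → ℝ) : Prop :=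
  g.mulVec x0 = x0 ∧ ldot x0 x0 = 1 ∧
  IsFutureNull xm ∧ EuclUnit xm ∧ IsFutureNull xp ∧ EuclUnit xp ∧
  ∃ l : ℝ, 0 < l ∧ l < 1 ∧ g.mulVec xm = l • xm ∧ g.mulVec xp = l⁻¹ • xp ∧
    det3 x0 xm xp > 0

/-- g is hyperbolic: it admits three distinct real eigenvalues. -/
def IsHyperbolic (g : Matrix (Fin 3) (Fin 3) ℝ) : Prop :=
  ∃ a b c : ℝ, a ≠ b ∧ b ≠ c ∧ a ≠ c ∧
    IsEigenvalue g a ∧ IsEigenvalue g b ∧ IsEigenvalue g c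

/-!
Transporting the null frame of `ghⁿ` by `h^{n-k}` gives a null frame of `h^{n-k} g h^k`, and the
neutral vector of a null frame is unique, so `x⁰(h^{n-k} g h^k) = h^{n-k} x⁰(ghⁿ)`. As `g h^k` is a
Lorentz isometry sending `h^{n-k} x⁰(ghⁿ)` to `x⁰(ghⁿ)`, the `k`-th term `⟨g h^k v_h, x⁰(ghⁿ)⟩` of
`α(γηⁿ)` equals `⟨v_h, x⁰(h^{n-k} g h^k)⟩`.
-/

open Matrix

lemma ldot_add_left (x y z : Fin 3 → ℝ) : ldot (x + y) z = ldot x z + ldot y z := by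
  simp only [ldot, Pi.add_apply]; ring

lemma ldot_smul_smul (a b : ℝ) (x y : Fin 3 → ℝ) : ldot (a • x) (b • y) = a * b * ldot x y := by
  simp only [ldot, Pi.smul_apply, smul_eq_mul]; ring

lemma ldot_sum_left {ι : Type*} (s : Finset ι) (f : ι → Fin 3 → ℝ) (z : Fin 3 → ℝ) :
    ldot (∑ i ∈ s, f i) z = ∑ i ∈ s, ldot (f i) z := by
  simp only [ldot, Finset.sum_apply, Finset.sum_mul, Finset.sum_sub_distrib, Finset.sum_add_distrib]

lemma det3_eq (x y z : Fin 3 → ℝ) : det3 x y z =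
    x 0 * (y 1 * z 2) - x 0 * (z 1 * y 2) - y 0 * (x 1 * z 2) + y 0 * (z 1 * x 2)
      + z 0 * (x 1 * y 2) - z 0 * (y 1 * x 2) := by
  rw [det3, Matrix.det_transpose]
  simp only [det_fin_three, of_apply, cons_val', cons_val_fin_one, cons_val_zero, cons_val_one,
    cons_val]
  ring

lemma det3_rotate (x y z : Fin 3 → ℝ) : det3 x y z = det3 y z x := by
  simp only [det3_eq]; ring

lemma det3_smul (a b c : ℝ) (x y z : Fin 3 → ℝ) :
    det3 (a • x) (b • y) (c • z) = a * b * c * det3 x y z := by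
  simp only [det3_eq, Pi.smul_apply, smul_eq_mul]; ring

lemma det3_mulVec (k : Matrix (Fin 3) (Fin 3) ℝ) (x y z : Fin 3 → ℝ) :
    det3 (k *ᵥ x) (k *ᵥ y) (k *ᵥ z) = k.det * det3 x y z := by
  simp only [det3_eq, Matrix.mulVec, dotProduct, Fin.sum_univ_three, Matrix.det_fin_three]
  ring

lemma det3_smul_eq_cramer (x y z v : Fin 3 → ℝ) :
    det3 x y z • v = det3 v y z • x + det3 x v z • y + det3 x y v • z := by
  funext i
  fin_cases i <;>
    simp only [det3_eq, Fin.zero_eta, Fin.mk_one, Fin.reduceFinMk, Pi.smul_apply, smul_eq_mul,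
      Pi.add_apply] <;>
    ring

lemma det_mul_det3_of_eigen {w : Matrix (Fin 3) (Fin 3) ℝ} {x y z : Fin 3 → ℝ} {a b c : ℝ}
    (hx : w *ᵥ x = a • x) (hy : w *ᵥ y = b • y) (hz : w *ᵥ z = c • z) :
    w.det * det3 x y z = a * b * c * det3 x y z := by
  rw [← det3_mulVec, hx, hy, hz, det3_smul]

/-- Swapping `v` into the slot of `y` or `z` moves the product of eigenvalues away from `det w`, so
those Cramer coefficients of `v` vanish. -/
lemma exists_eq_smul_of_eigen {w : Matrix (Fin 3) (Fin 3) ℝ} {x y z v : Fin 3 → ℝ} {a b c d : ℝ}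
    (hD : det3 x y z ≠ 0) (hx : w *ᵥ x = a • x) (hy : w *ᵥ y = b • y) (hz : w *ᵥ z = c • z)
    (hv : w *ᵥ v = d • v) (ha : a ≠ 0) (hb : b ≠ 0) (hc : c ≠ 0) (hdb : d ≠ b) (hdc : d ≠ c) :
    ∃ u : ℝ, v = u • x := by
  have hdet : w.det = a * b * c :=
    mul_right_cancel₀ hD (det_mul_det3_of_eigen hx hy hz)
  have hxvz : det3 x v z = 0 := by
    by_contra h
    have := mul_right_cancel₀ h (hdet ▸ det_mul_det3_of_eigen hx hv hz)
    exact hdb (mul_left_cancel₀ ha (mul_right_cancel₀ hc this)).symm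
  have hxyv : det3 x y v = 0 := by
    by_contra h
    have := mul_right_cancel₀ h (hdet ▸ det_mul_det3_of_eigen hx hy hv)
    exact hdc (mul_left_cancel₀ (mul_ne_zero ha hb) this).symm
  refine ⟨det3 v y z / det3 x y z, ?_⟩
  have hcramer := det3_smul_eq_cramer x y z v
  rw [hxvz, hxyv, zero_smul, zero_smul, add_zero, add_zero] at hcramer
  rw [div_eq_inv_mul, mul_smul, ← hcramer, inv_smul_smul₀ hD]

lemma IsFutureNull.ne_zero {x : Fin 3 → ℝ} (hx : IsFutureNull x) : x ≠ 0 := by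
  rintro rfl
  exact lt_irrefl 0 hx.2

lemma IsFutureNull.smul {x : Fin 3 → ℝ} (hx : IsFutureNull x) {r : ℝ} (hr : 0 < r) :
    IsFutureNull (r • x) :=
  ⟨by rw [ldot_smul_smul, hx.1, mul_zero], by simpa using mul_pos hr hx.2⟩

lemma IsFutureNull.pos_of_smul {x : Fin 3 → ℝ} (hx : IsFutureNull x) {r : ℝ}
    (hrx : IsFutureNull (r • x)) : 0 < r :=
  pos_of_mul_pos_left (by simpa using hrx.2) hx.2.le

/-- The eigenvalues `1, λ, λ⁻¹` are distinct, so each frame vector is pinned to its eigenline; the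
future-pointing condition fixes the scalars on the null lines as positive, the orientation then
fixes the sign on the spacelike line, and the normalisation its size. -/
lemma IsNullFrameOf.neutral_unique {w : Matrix (Fin 3) (Fin 3) ℝ} {x0 xm xp y0 ym yp : Fin 3 → ℝ}
    (hx : IsNullFrameOf w x0 xm xp) (hy : IsNullFrameOf w y0 ym yp) : y0 = x0 := by
  obtain ⟨hwx0, hx0, hxm, -, hxp, -, l, hl0, hl1, hwxm, hwxp, hD⟩ := hx
  obtain ⟨hwy0, hy0, hym, -, hyp, -, m, hm0, hm1, hwym, hwyp, hDy⟩ := hy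
  have hl : 1 < l⁻¹ := (one_lt_inv₀ hl0).2 hl1
  have hm : 1 < m⁻¹ := (one_lt_inv₀ hm0).2 hm1
  replace hwx0 : w *ᵥ x0 = (1 : ℝ) • x0 := by rw [one_smul]; exact hwx0
  replace hwy0 : w *ᵥ y0 = (1 : ℝ) • y0 := by rw [one_smul]; exact hwy0
  have hl' : l⁻¹ ≠ 0 := (inv_pos.2 hl0).ne'
  obtain ⟨u, rfl⟩ : ∃ u : ℝ, y0 = u • x0 :=
    exists_eq_smul_of_eigen hD.ne' hwx0 hwxm hwxp hwy0 one_ne_zero hl0.ne' hl' hl1.ne' hl.ne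
  obtain ⟨s, rfl⟩ : ∃ s : ℝ, ym = s • xm :=
    exists_eq_smul_of_eigen (det3_rotate x0 xm xp ▸ hD.ne') hwxm hwxp hwx0 hwym
      hl0.ne' hl' one_ne_zero (hm1.trans hl).ne hm1.ne
  obtain ⟨t, rfl⟩ : ∃ t : ℝ, yp = t • xp :=
    exists_eq_smul_of_eigen (det3_rotate xm xp x0 ▸ det3_rotate x0 xm xp ▸ hD.ne')
      hwxp hwx0 hwxm hwyp hl' one_ne_zero hl0.ne' hm.ne' (hl1.trans hm).ne'
  have hs := hxm.pos_of_smul hym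
  have ht := hxp.pos_of_smul hyp
  rw [det3_smul] at hDy
  have hu : 0 < u :=
    pos_of_mul_pos_left (pos_of_mul_pos_left (pos_of_mul_pos_left hDy hD.le) ht.le) hs.le
  rw [ldot_smul_smul, hx0, mul_one] at hy0
  obtain rfl : u = 1 := by nlinarith
  exact one_smul ℝ x0

lemma IsSOplus.one : IsSOplus 1 :=
  ⟨fun x y => by simp only [one_mulVec], det_one, fun x _ _ hx => by rwa [one_mulVec]⟩

lemma IsSOplus.mul {A B : Matrix (Fin 3) (Fin 3) ℝ} (hA : IsSOplus A) (hB : IsSOplus B) :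
    IsSOplus (A * B) := by
  refine ⟨fun x y => by rw [← mulVec_mulVec, ← mulVec_mulVec, hA.1, hB.1],
    by rw [det_mul, hA.2.1, hB.2.1, one_mul], fun x hx hx0 hx2 => ?_⟩
  have hBx : B *ᵥ x ≠ 0 := fun h0 =>
    one_ne_zero (hB.2.1 ▸ exists_mulVec_eq_zero_iff.1 ⟨x, hx0, h0⟩)
  rw [← mulVec_mulVec]
  exact hA.2.2 _ (by rw [hB.1]; exact hx) hBx (hB.2.2 x hx hx0 hx2)

lemma IsSOplus.pow {A : Matrix (Fin 3) (Fin 3) ℝ} (hA : IsSOplus A) (m : ℕ) : IsSOplus (A ^ m) := by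
  induction m with
  | zero => simpa using IsSOplus.one
  | succ k ih => rw [pow_succ]; exact ih.mul hA

lemma IsSOplus.isFutureNull_mulVec {k : Matrix (Fin 3) (Fin 3) ℝ} (hk : IsSOplus k)
    {x : Fin 3 → ℝ} (hx : IsFutureNull x) : IsFutureNull (k *ᵥ x) :=
  ⟨by rw [hk.1]; exact hx.1, hk.2.2 x hx.1 hx.ne_zero hx.2⟩

lemma exists_pos_euclUnit_smul {x : Fin 3 → ℝ} (hx : 0 < x 2) :
    ∃ r : ℝ, 0 < r ∧ EuclUnit (r • x) := by
  have hS : 0 < x 0 ^ 2 + x 1 ^ 2 + x 2 ^ 2 := by positivity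
  refine ⟨(√(x 0 ^ 2 + x 1 ^ 2 + x 2 ^ 2))⁻¹, by positivity, ?_⟩
  have hsq := Real.sq_sqrt hS.le
  simp only [EuclUnit, Pi.smul_apply, smul_eq_mul, mul_pow, inv_pow, hsq]
  field_simp

lemma mulVec_eq_smul_of_intertwine {k A B : Matrix (Fin 3) (Fin 3) ℝ} (hAB : k * A = B * k)
    {v : Fin 3 → ℝ} {c : ℝ} (hv : A *ᵥ v = c • v) : B *ᵥ (k *ᵥ v) = c • (k *ᵥ v) := by
  rw [mulVec_mulVec, ← hAB, ← mulVec_mulVec, hv, mulVec_smul]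

/-- The equivariance `x⁰(kAk⁻¹) = k x⁰(A)`. -/
lemma IsNullFrameOf.conj {k A B : Matrix (Fin 3) (Fin 3) ℝ} (hk : IsSOplus k) (hAB : k * A = B * k)
    {x0 xm xp : Fin 3 → ℝ} (hf : IsNullFrameOf A x0 xm xp) :
    ∃ ym yp, IsNullFrameOf B (k *ᵥ x0) ym yp := by
  obtain ⟨hwx0, hx0, hxm, -, hxp, -, l, hl0, hl1, hwxm, hwxp, hD⟩ := hf
  have hkxm := hk.isFutureNull_mulVec hxm
  have hkxp := hk.isFutureNull_mulVec hxp
  obtain ⟨r, hr, hrU⟩ := exists_pos_euclUnit_smul hkxm.2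
  obtain ⟨q, hq, hqU⟩ := exists_pos_euclUnit_smul hkxp.2
  refine ⟨r • (k *ᵥ xm), q • (k *ᵥ xp), ?_, by rw [hk.1]; exact hx0, hkxm.smul hr, hrU,
    hkxp.smul hq, hqU, l, hl0, hl1, ?_, ?_, ?_⟩
  · simpa using mulVec_eq_smul_of_intertwine (c := 1) hAB (by simpa using hwx0)
  · rw [mulVec_smul, mulVec_eq_smul_of_intertwine hAB hwxm, smul_comm]
  · rw [mulVec_smul, mulVec_eq_smul_of_intertwine hAB hwxp, smul_comm]
  · have h := det3_smul 1 r q (k *ᵥ x0) (k *ᵥ xm) (k *ᵥ xp)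
    rw [one_smul, det3_mulVec, hk.2.1] at h
    rw [h]
    nlinarith [mul_pos (mul_pos hr hq) hD]

lemma ldot_mulVec_eq_of_mul_mulVec_eq {A B : Matrix (Fin 3) (Fin 3) ℝ}
    (hA : ∀ x y, ldot (A *ᵥ x) (A *ᵥ y) = ldot x y) {x : Fin 3 → ℝ} (hx : (A * B) *ᵥ x = x)
    (v : Fin 3 → ℝ) : ldot (A *ᵥ v) x = ldot v (B *ᵥ x) := by
  rw [← hA v, mulVec_mulVec, hx]

/-- `γηⁿ` has linear part `ghⁿ` and translational part `v_g + g Σ_{j<n} h^j v_h`. -/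
theorem stmt_12_general (g h : Matrix (Fin 3) (Fin 3) ℝ) (hg : IsSOplus g) (hh : IsSOplus h)
    (vg vh : Fin 3 → ℝ) (n : ℕ)
    (x0n : Fin 3 → ℝ) (x0s : ℕ → Fin 3 → ℝ)
    (hgh : ∃ xm xp, IsNullFrameOf (g * h ^ n) x0n xm xp)
    (hks : ∀ k < n, ∃ xm xp, IsNullFrameOf (h ^ (n - k) * g * h ^ k) (x0s k) xm xp) :
    ldot (vg + g.mulVec (∑ j ∈ Finset.range n, (h ^ j).mulVec vh)) x0n =
      ldot vg x0n + ∑ k ∈ Finset.range n, ldot vh (x0s k) := by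
  obtain ⟨xm, xp, hframe⟩ := hgh
  have hsplit : ∀ k < n, h ^ k * h ^ (n - k) = h ^ n := fun k hk => by
    rw [← pow_add, Nat.add_sub_cancel' hk.le]
  rw [ldot_add_left, mulVec_sum, ldot_sum_left]
  refine congrArg _ (Finset.sum_congr rfl fun k hk => ?_)
  replace hk := Finset.mem_range.1 hk
  obtain ⟨ym, yp, hframe_k⟩ := hks k hk
  have hconj : h ^ (n - k) * (g * h ^ n) = h ^ (n - k) * g * h ^ k * h ^ (n - k) := by
    rw [← hsplit k hk]; simp only [mul_assoc]
  obtain ⟨zm, zp, hframe_conj⟩ := hframe.conj (hh.pow (n - k)) hconj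
  rw [hframe_conj.neutral_unique hframe_k, mulVec_mulVec]
  exact ldot_mulVec_eq_of_mul_mulVec_eq (hg.mul (hh.pow k)).1
    (by rw [mul_assoc, hsplit k hk]; exact hframe.1) vh

/-- α(γηⁿ) = ⟨v_g, x⁰(ghⁿ)⟩ + Σ_{k=0}^{n-1} ⟨v_h, x⁰(h^{n-k} g h^k)⟩, where
γ : x ↦ g x + v_g and η : x ↦ h x + v_h; the translational part of γηⁿ is
v_g + g (Σ_{j=0}^{n-1} h^j v_h). -/
theorem stmt_12 (g h : Matrix (Fin 3) (Fin 3) ℝ) (hg : IsSOplus g) (hh : IsSOplus h)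
    (vg vh : Fin 3 → ℝ) (n : ℕ) (hn : 1 ≤ n)
    (hghyp : ∃ x0 xm xp, IsNullFrameOf g x0 xm xp)
    (hhhyp : ∃ x0 xm xp, IsNullFrameOf h x0 xm xp)
    (x0n : Fin 3 → ℝ) (x0s : ℕ → Fin 3 → ℝ)
    (hgh : ∃ xm xp, IsNullFrameOf (g * h ^ n) x0n xm xp)
    (hks : ∀ k < n, ∃ xm xp, IsNullFrameOf (h ^ (n - k) * g * h ^ k) (x0s k) xm xp) :
    ldot (vg + g.mulVec (∑ j ∈ Finset.range n, (h ^ j).mulVec vh)) x0n =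
      ldot vg x0n + ∑ k ∈ Finset.range n, ldot vh (x0s k) :=
  stmt_12_general g h hg hh vg vh n x0n x0s hgh hks
end
end

section
/- Let A ⊂ F be a conical interval with boundary rays x⁻(A), x⁺(A). Then for vectors x, y ∈ A spanning rays in the interior of A, the triple (x⁺(A), x, y) is positively oriented if and only if (x⁻(A), x, y) is positively oriented. -/
noncomputable section

/-- A future-pointing lightlike vector of Euclidean length one (representing a
future-pointing lightlike ray). -/
def FutureUnitNull (x : Fin 3 → ℝ) : Prop :=
  ldot x x = 0 ∧ x 2 > 0 ∧ x 0 ^ 2 + x 1 ^ 2 + x 2 ^ 2 = 1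

/-- The closed conical interval with boundary rays spanned by a and b, ordered so that
⟨x, a ⊠ b⟩ ≥ 0 on the interval (a = x⁻(U), b = x⁺(U)). -/
def arc (a b : Fin 3 → ℝ) : Set (Fin 3 → ℝ) :=
  {x | FutureUnitNull x ∧ 0 ≤ ldot x (lcross a b)}

/-- (u, xm, xp) is a null frame: u is unit-spacelike, xm = x⁻(u) and xp = x⁺(u) are the
future-pointing Euclidean-unit lightlike vectors spanning u^⊥ ∩ lightcone, ordered so
that (u, xm, xp) is positively oriented. -/
def IsNullFramePair (u xm xp : Fin 3 → ℝ) : Prop :=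
  ldot u u = 1 ∧ FutureUnitNull xm ∧ FutureUnitNull xp ∧
  ldot xm u = 0 ∧ ldot xp u = 0 ∧ det3 u xm xp > 0

/-- The cone C(U⁻, U⁺): vectors pairing positively with every unit-spacelike u whose
null frame satisfies x⁻(u) ∈ U⁻ and x⁺(u) ∈ U⁺. -/
def coneC (Um Up : Set (Fin 3 → ℝ)) : Set (Fin 3 → ℝ) :=
  {v | ∀ u xm xp : Fin 3 → ℝ, IsNullFramePair u xm xp → xm ∈ Um → xp ∈ Up → 0 < ldot v u}

private lemma det3_expand (x y z : Fin 3 → ℝ) : det3 x y z =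
    x 0 * (y 1 * z 2 - y 2 * z 1) - y 0 * (x 1 * z 2 - x 2 * z 1) + z 0 * (x 1 * y 2 - x 2 * y 1) := by
  simp [det3, Matrix.det_fin_three, Matrix.vecHead, Matrix.vecTail, Matrix.transpose_apply,
    Function.comp]
  ring

private lemma ldot_lcross (u v w : Fin 3 → ℝ) : ldot u (lcross v w) = det3 u v w := by
  rw [det3_expand]
  simp [ldot, lcross]
  ring

private lemma key_identity (a b x y : Fin 3 → ℝ)
    (ha : ldot a a = 0) (hb : ldot b b = 0) (hx : ldot x x = 0) (hy : ldot y y = 0) :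
    det3 a x y * det3 b x y * ldot a b = det3 x a b * det3 y a b * ldot x y := by
  simp only [det3_expand, ldot] at *
  linear_combination -(((-1) * (b 2)^2 * (x 1)^2 * (y 0)^2 + (2) * (b 2)^2 * (x 0) * (x 1) * (y 0) * (y 1) + (-1) * (b 2)^2 * (x 0)^2 * (y 1)^2 + (b 1) * (b 2) * (x 1) * (x 2) * (y 0)^2 + (-1) * (b 1) * (b 2) * (x 0) * (x 2) * (y 0) * (y 1) + (-1) * (b 1) * (b 2) * (x 0) * (x 1) * (y 0) * (y 2) + (b 1) * (b 2) * (x 0)^2 * (y 1) * (y 2) + (b 1)^2 * (x 0) * (x 2) * (y 0) * (y 2) + (-1) * (b 1)^2 * (x 0) * (x 1) * (y 0) * (y 1) + (-1) * (b 1)^2 * (x 0)^2 * (y 0)^2 + (-1) * (b 0) * (b 2) * (x 1) * (x 2) * (y 0) * (y 1) + (b 0) * (b 2) * (x 1)^2 * (y 0) * (y 2) + (b 0) * (b 2) * (x 0) * (x 2) * (y 1)^2 + (-1) * (b 0) * (b 2) * (x 0) * (x 1) * (y 1) * (y 2) + (-1) * (b 0) * (b 1) * (x 1) * (x 2) * (y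 0) * (y 2) + (b 0) * (b 1) * (x 1)^2 * (y 0) * (y 1) + (-1) * (b 0) * (b 1) * (x 0) * (x 2) * (y 1) * (y 2) + (b 0) * (b 1) * (x 0) * (x 1) * (y 1)^2 + (b 0) * (b 1) * (x 0) * (x 1) * (y 0)^2 + (b 0) * (b 1) * (x 0)^2 * (y 0) * (y 1) + (b 0)^2 * (x 1) * (x 2) * (y 1) * (y 2) + (-1) * (b 0)^2 * (x 1)^2 * (y 1)^2 + (-1) * (b 0)^2 * (x 0) * (x 1) * (y 0) * (y 1)) * ha + ((a 1) * (a 2) * (x 1) * (x 2) * (y 0)^2 + (-1) * (a 1) * (a 2) * (x 0) * (x 2) * (y 0) * (y 1) + (-1) * (a 1) * (a 2) * (x 0) * (x 1) * (y 0) * (y 2) + (a 1) * (a 2) * (x 0)^2 * (y 1) * (y 2) + (-1) * (a 1)^2 * (x 1)^2 * (y 0)^2 + (a 1)^2 * (x 0) * (x 2) * (y 0) * (y 2) + (a 1)^2 * (x 0) * (x 1) * (y 0) * (y 1) + (-1) * (a 1)^2 * (x 0)^2 * (y 1)^2 + (-1) * (a 1)^2 * (x 0)^2 * (y 0)^2 +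 (-1) * (a 0) * (a 2) * (x 1) * (x 2) * (y 0) * (y 1) + (a 0) * (a 2) * (x 1)^2 * (y 0) * (y 2) + (a 0) * (a 2) * (x 0) * (x 2) * (y 1)^2 + (-1) * (a 0) * (a 2) * (x 0) * (x 1) * (y 1) * (y 2) + (-1) * (a 0) * (a 1) * (x 1) * (x 2) * (y 0) * (y 2) + (a 0) * (a 1) * (x 1)^2 * (y 0) * (y 1) + (-1) * (a 0) * (a 1) * (x 0) * (x 2) * (y 1) * (y 2) + (a 0) * (a 1) * (x 0) * (x 1) * (y 1)^2 + (a 0) * (a 1) * (x 0) * (x 1) * (y 0)^2 + (a 0) * (a 1) * (x 0)^2 * (y 0) * (y 1) + (a 0)^2 * (x 1) * (x 2) * (y 1) * (y 2) + (-1) * (a 0)^2 * (x 1)^2 * (y 1)^2 + (-1) * (a 0)^2 * (x 1)^2 * (y 0)^2 + (a 0)^2 * (x 0) * (x 1) * (y 0) * (y 1) + (-1) * (a 0)^2 * (x 0)^2 * (y 1)^2) * hb + ((-1) * (a 1) * (a 2) * (b 1) * (b 2) * (y 0)^2 + (a 1) * (a 2) * (b 0) * (b 2) * (y 0) * (y 1)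 + (a 1) * (a 2) * (b 0) * (b 1) * (y 0) * (y 2) + (-1) * (a 1) * (a 2) * (b 0)^2 * (y 1) * (y 2) + (a 1)^2 * (b 1)^2 * (y 0)^2 + (-1) * (a 1)^2 * (b 0) * (b 2) * (y 0) * (y 2) + (-1) * (a 1)^2 * (b 0) * (b 1) * (y 0) * (y 1) + (a 1)^2 * (b 0)^2 * (y 2)^2 + (a 0) * (a 2) * (b 1) * (b 2) * (y 0) * (y 1) + (-1) * (a 0) * (a 2) * (b 1)^2 * (y 0) * (y 2) + (-1) * (a 0) * (a 2) * (b 0) * (b 2) * (y 1)^2 + (a 0) * (a 2) * (b 0) * (b 1) * (y 1) * (y 2) + (a 0) * (a 1) * (b 1) * (b 2) * (y 0) * (y 2) + (-1) * (a 0) * (a 1) * (b 1)^2 * (y 0) * (y 1) + (a 0) * (a 1) * (b 0) * (b 2) * (y 1) * (y 2) + (-2) * (a 0) * (a 1) * (b 0) * (b 1) * (y 2)^2 + (a 0) * (a 1) * (b 0) * (b 1) * (y 1)^2 + (a 0) * (a 1) * (b 0) * (b 1) * (y 0)^2 + (-1) * (a 0) * (a 1) * (b 0)^2 * (y 0) *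 (y 1) + (-1) * (a 0)^2 * (b 1) * (b 2) * (y 1) * (y 2) + (a 0)^2 * (b 1)^2 * (y 2)^2 + (-1) * (a 0)^2 * (b 0) * (b 1) * (y 0) * (y 1) + (a 0)^2 * (b 0)^2 * (y 1)^2) * hx + ((-1) * (a 1) * (a 2) * (b 1) * (b 2) * (x 0)^2 + (a 1) * (a 2) * (b 0) * (b 2) * (x 0) * (x 1) + (a 1) * (a 2) * (b 0) * (b 1) * (x 0) * (x 2) + (-1) * (a 1) * (a 2) * (b 0)^2 * (x 1) * (x 2) + (a 1)^2 * (b 1)^2 * (x 0)^2 + (-1) * (a 1)^2 * (b 0) * (b 2) * (x 0) * (x 2) + (-1) * (a 1)^2 * (b 0) * (b 1) * (x 0) * (x 1) + (a 1)^2 * (b 0)^2 * (x 1)^2 + (a 1)^2 * (b 0)^2 * (x 0)^2 + (a 0) * (a 2) * (b 1) * (b 2) * (x 0) * (x 1) + (-1) * (a 0) * (a 2) * (b 1)^2 * (x 0) * (x 2) + (-1) * (a 0) * (a 2) * (b 0) * (b 2) * (x 1)^2 + (a 0) * (a 2) * (b 0) * (b 1) * (x 1) * (x 2) + (a 0) *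 (a 1) * (b 1) * (b 2) * (x 0) * (x 2) + (-1) * (a 0) * (a 1) * (b 1)^2 * (x 0) * (x 1) + (a 0) * (a 1) * (b 0) * (b 2) * (x 1) * (x 2) + (-1) * (a 0) * (a 1) * (b 0) * (b 1) * (x 1)^2 + (-1) * (a 0) * (a 1) * (b 0) * (b 1) * (x 0)^2 + (-1) * (a 0) * (a 1) * (b 0)^2 * (x 0) * (x 1) + (-1) * (a 0)^2 * (b 1) * (b 2) * (x 1) * (x 2) + (a 0)^2 * (b 1)^2 * (x 1)^2 + (a 0)^2 * (b 1)^2 * (x 0)^2 + (-1) * (a 0)^2 * (b 0) * (b 1) * (x 0) * (x 1) + (a 0)^2 * (b 0)^2 * (x 1)^2) * hy)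

private lemma third_coord_sq {p : Fin 3 → ℝ} (hp : FutureUnitNull p) : p 2 ^ 2 = 1 / 2 := by
  obtain ⟨h0, h2, h1⟩ := hp
  simp only [ldot] at h0
  nlinarith

private lemma sq_sum_eq {p q : Fin 3 → ℝ} (hp : FutureUnitNull p) (hq : FutureUnitNull q) :
    (p 0 - q 0) ^ 2 + (p 1 - q 1) ^ 2 = -2 * ldot p q := by
  have h2 : p 2 = q 2 := by
    have hps := third_coord_sq hp
    have hqs := third_coord_sq hq
    have : (p 2 - q 2) * (p 2 + q 2) = 0 := by nlinarith
    rcases mul_eq_zero.1 this with h | h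
    · linarith
    · nlinarith [hp.2.1, hq.2.1]
  have hp0 := hp.1
  have hq0 := hq.1
  have hps := third_coord_sq hp
  simp only [ldot] at hp0 hq0 ⊢
  nlinarith [h2]

private lemma ldot_nonpos {p q : Fin 3 → ℝ} (hp : FutureUnitNull p) (hq : FutureUnitNull q) :
    ldot p q ≤ 0 := by
  nlinarith [sq_sum_eq hp hq, sq_nonneg (p 0 - q 0), sq_nonneg (p 1 - q 1)]

private lemma eq_of_ldot_eq_zero {p q : Fin 3 → ℝ} (hp : FutureUnitNull p) (hq : FutureUnitNull q)
    (h : ldot p q = 0) : p = q := by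
  have hs := sq_sum_eq hp hq
  have h0 : p 0 = q 0 := by nlinarith [sq_nonneg (p 0 - q 0), sq_nonneg (p 1 - q 1)]
  have h1 : p 1 = q 1 := by nlinarith [sq_nonneg (p 0 - q 0), sq_nonneg (p 1 - q 1)]
  have h2 : p 2 = q 2 := by
    have hps := third_coord_sq hp
    have hqs := third_coord_sq hq
    have : (p 2 - q 2) * (p 2 + q 2) = 0 := by nlinarith
    rcases mul_eq_zero.1 this with h | h
    · linarith
    · nlinarith [hp.2.1, hq.2.1]
  funext i
  fin_cases i <;> assumption

private lemma det3_repeat (v w : Fin 3 → ℝ) : det3 v w w = 0 := by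
  rw [det3_expand]; ring

/-- For x, y in the interior of a conical interval A = arc a b (with x⁻(A) = a,
x⁺(A) = b), the triple (x⁺(A), x, y) is positively oriented iff (x⁻(A), x, y) is. -/
theorem stmt_18 (a b x y : Fin 3 → ℝ)
    (ha : FutureUnitNull a) (hb : FutureUnitNull b) (hab : a ≠ b)
    (hx : FutureUnitNull x) (hy : FutureUnitNull y)
    (hxA : 0 < ldot x (lcross a b)) (hyA : 0 < ldot y (lcross a b)) :
    det3 b x y > 0 ↔ det3 a x y > 0 := by
  rw [ldot_lcross] at hxA hyA
  have hab' : ldot a b < 0 := by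
    rcases lt_or_eq_of_le (ldot_nonpos ha hb) with h | h
    · exact h
    · exact absurd (eq_of_ldot_eq_zero ha hb h) hab
  rcases lt_or_eq_of_le (ldot_nonpos hx hy) with hxy | hxy
  · have hid := key_identity a b x y ha.1 hb.1 hx.1 hy.1
    have hprod : 0 < det3 a x y * det3 b x y := by
      have hS : det3 x a b * det3 y a b * ldot x y < 0 :=
        mul_neg_of_pos_of_neg (mul_pos hxA hyA) hxy
      by_contra h
      push_neg at h
      nlinarith [hid, hS, hab']
    constructor
    · intro h; nlinarith
    · intro h; nlinarith
  · have hxy' : x = y := eq_of_ldot_eq_zero hx hy hxy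
    subst hxy'
    rw [det3_repeat, det3_repeat]
end
end
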